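/- Let (A, [·,·]_A, d) be a differential Lie superalgebra with bracket of parity ε and odd derivation d satisfying d² = 0. Define the derived bracket a ∘_d b := (−1)^{|a|+1}[d a, b]_A. Then the derived bracket satisfies the Leibniz (Loday) identity a ∘_d (b ∘_d c) = (a ∘_d b) ∘_d c + (−1)^{(|a|+ε+1)(|b|+ε+1)} b ∘_d (a ∘_d c) for all homogeneous a, b, c. -/

import Mathlib

/-- The sign `(−1)^i` of a parity `i ∈ Z₂`. -/
noncomputable def sgn (i : ZMod 2) : ℝ := if i = 0 then 1 else -1

/-- A differential Lie superalgebra of parity `ε`: a `Z₂`-graded real vector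
space `V` (with grading given by submodules `grade i`), a bilinear bracket of
parity `ε` which is graded skew-symmetric and satisfies the graded Jacobi
identity, and an odd derivation `d` of the bracket with `d² = 0`. -/
structure DiffLieSuper (V : Type*) [AddCommGroup V] [Module ℝ V] (ε : ZMod 2) where
  grade : ZMod 2 → Submodule ℝ V
  br : V →ₗ[ℝ] V →ₗ[ℝ] V
  d : V →ₗ[ℝ] V
  br_grade : ∀ i j, ∀ a ∈ grade i, ∀ b ∈ grade j, br a b ∈ grade (i + j + ε)
  br_skew : ∀ i j, ∀ a ∈ grade i, ∀ b ∈ grade j,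
    br a b = - (sgn ((i + ε) * (j + ε)) • br b a)
  jacobi : ∀ i j, ∀ a ∈ grade i, ∀ b ∈ grade j, ∀ c,
    br a (br b c) = br (br a b) c + sgn ((i + ε) * (j + ε)) • br b (br a c)
  d_grade : ∀ i, ∀ a ∈ grade i, d a ∈ grade (i + 1)
  d_br : ∀ i, ∀ a ∈ grade i, ∀ b,
    d (br a b) = br (d a) b + sgn (i + ε) • br a (d b)
  d_sq : ∀ a, d (d a) = 0

/-- The derived bracket `a ∘_d b := (−1)^{|a|+1}[da, b]`, where `i` is the
parity of the (homogeneous) first argument `a`. -/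
noncomputable def DiffLieSuper.circd {V : Type*} [AddCommGroup V] [Module ℝ V] {ε : ZMod 2}
    (A : DiffLieSuper V ε) (i : ZMod 2) (a b : V) : V :=
  sgn (i + 1) • A.br (A.d a) b

lemma sgn_add (x y : ZMod 2) : sgn (x + y) = sgn x * sgn y := by
  unfold sgn; rcases (show ∀ z : ZMod 2, z = 0 ∨ z = 1 by decide) x with rfl | rfl <;> rcases (show ∀ z : ZMod 2, z = 0 ∨ z = 1 by decide) y with rfl | rfl <;> (norm_num; try decide)

/-- The derived bracket on a differential Lie superalgebra of parity `ε`
satisfies the Leibniz (Loday) identity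
`a ∘_d (b ∘_d c) = (a ∘_d b) ∘_d c + (−1)^{(|a|+ε+1)(|b|+ε+1)} b ∘_d (a ∘_d c)`
for homogeneous `a, b` (note `a ∘_d b` has parity `|a| + |b| + ε + 1`). -/
theorem derived_bracket_leibniz {V : Type*} [AddCommGroup V] [Module ℝ V] {ε : ZMod 2}
    (A : DiffLieSuper V ε) (i j : ZMod 2) (a b : V)
    (ha : a ∈ A.grade i) (hb : b ∈ A.grade j) (c : V) :
    A.circd i a (A.circd j b c) =
      A.circd (i + j + ε + 1) (A.circd i a b) c +
        sgn ((i + ε + 1) * (j + ε + 1)) • A.circd j b (A.circd i a c) := by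
  have hda := A.d_grade i a ha
  have hdb := A.d_grade j b hb
  have jac := A.jacobi (i + 1) (j + 1) _ hda _ hdb c
  have hd : A.d (A.br (A.d a) b) = sgn (i + 1 + ε) • A.br (A.d a) (A.d b) := by
    rw [A.d_br (i + 1) _ hda b, A.d_sq]
    simp
  simp only [DiffLieSuper.circd, map_smul, LinearMap.smul_apply, hd, jac, smul_add, smul_smul]
  match_scalars <;>
    (clear jac hd hda hdb hb ha;
     fin_cases i <;> fin_cases j <;> fin_cases ε <;>
       simp (config := { decide := true }) [sgn])
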